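/- Let M be a finitely generated ℕ^r-graded module over S = K[x_1,…,x_r], let u ∈ ℕ^r have u_i > 0 for all i, and let u_0 ∈ ℕ^r. Then the rank of the restriction of M to the line l(j) = j·u + u_0 equals rk_S(M); concretely, there exists N ∈ ℕ such that for all j ≥ N, dim_K M_{j·u + u_0} = rk_S(M), and hence the ℕ-graded K[x]-module M∘l with (M∘l)_j = M_{j·u+u_0} and x acting by multiplication by x^u satisfies rk_{K[x]}(M∘l) = rk_S(M). -/

import Mathlib

/-- The rank of a module `M` over an integral domain `R`:
`rk_R(M) = dim_Q (M ⊗_R Q)` where `Q` is the fraction field of `R`. -/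
noncomputable def rk (R : Type) [CommRing R] (M : Type) [AddCommGroup M] [Module R M] : ℕ :=
  Module.finrank (FractionRing R) (TensorProduct R (FractionRing R) M)

/-!
Homogeneous generators of degrees `a_g` show that every piece `M_d` is finite-dimensional and that,
once `d` dominates all the `a_g`, multiplication by any monomial `x^w` maps `M_d` onto `M_{w+d}`.
Some nonzero `c ∈ S` annihilates the torsion submodule, and comparing homogeneous components of
`c • m = 0` shows that `x^{w₀}` kills every homogeneous torsion element, for any monomial `x^{w₀}`
in the support of `c`. Writing an element of `M_d` as `x^{w₀}` times one of `M_{d-w₀}` then shows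
that `M_d` is torsion-free for large `d`, so that in such degrees every `x^w : M_d → M_{w+d}` is
bijective. For such a `d`, a `K`-basis of `M_d` is `S`-linearly independent (compare components
again) and `x^d • M ⊆ S • M_d`, so it becomes a basis of `Frac(S) ⊗ M`: `rk_S M = dim_K M_d`.
The degrees `j • u + u₀` eventually dominate any given degree, and on `M'` the bijections `x^u`
become multiplication by `x`, so the same argument over `K[x]` gives `rk_{K[x]} M' = dim_K M'_N`.
-/

open scoped Polynomial

theorem mem_torsion_of_smul_eq_zero {A M : Type*} [CommRing A] [IsDomain A] [AddCommGroup M]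
    [Module A M] {a : A} (ha : a ≠ 0) {m : M} (h : a • m = 0) : m ∈ Submodule.torsion A M :=
  (Submodule.mem_torsion_iff m).mpr ⟨⟨a, mem_nonZeroDivisors_of_ne_zero ha⟩, h⟩

theorem rk_eq_card_of_linearIndependent {A : Type} [CommRing A] [IsDomain A]
    {M : Type} [AddCommGroup M] [Module A M] {ι : Type*} [Fintype ι] {b : ι → M}
    (hb : LinearIndependent A b) {a : A} (ha : a ≠ 0)
    (hspan : ∀ m, a • m ∈ Submodule.span A (Set.range b)) :
    rk A M = Fintype.card ι := by
  set Q := FractionRing A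
  set θ := TensorProduct.mk A Q M 1
  have hθb : Submodule.span Q (Set.range (θ ∘ b)) = ⊤ := by
    rw [eq_top_iff, ← span_eq_top_of_isLocalizedModule Q (nonZeroDivisors A) θ
      (v := Set.univ) Submodule.span_univ, Submodule.span_le]
    rintro _ ⟨m, -, rfl⟩
    have ha' : algebraMap A Q a ≠ 0 :=
      IsFractionRing.to_map_ne_zero_of_mem_nonZeroDivisors (mem_nonZeroDivisors_of_ne_zero ha)
    have hθa : θ (a • m) ∈ Submodule.span Q (Set.range (θ ∘ b)) := by
      refine Submodule.span_le_restrictScalars A Q _ ?_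
      rw [Set.range_comp, Submodule.span_image]
      exact Submodule.mem_map_of_mem (hspan m)
    rw [map_smul, ← algebraMap_smul Q a (θ m)] at hθa
    have := Submodule.smul_mem _ (algebraMap A Q a)⁻¹ hθa
    rwa [smul_smul, inv_mul_cancel₀ ha', one_smul] at this
  rw [rk, ← finrank_top, ← hθb,
    finrank_span_eq_card (hb.of_isLocalizedModule Q (nonZeroDivisors A) θ)]

theorem le_span_image_of_span_eq_top {K ι M τ : Type*} [Semiring K] [DecidableEq ι]
    [AddCommMonoid M] [Module K M] {ℳ : ι → Submodule K M} [DirectSum.Decomposition ℳ]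
    {y : τ → M} {deg : τ → ι} (hy : ∀ t, y t ∈ ℳ (deg t))
    (hspan : Submodule.span K (Set.range y) = ⊤) (d : ι) :
    ℳ d ≤ Submodule.span K (y '' {t | deg t = d}) := by
  set π : M →ₗ[K] M := (ℳ d).subtype ∘ₗ DirectSum.component K ι (fun i => ℳ i) d ∘ₗ
    (DirectSum.decomposeLinearEquiv ℳ).toLinearMap
  have hπ : ∀ m, π m = DirectSum.decompose ℳ m d := fun m => rfl
  intro m hm
  have hmπ : m ∈ (Submodule.span K (Set.range y)).map π := by
    rw [hspan, Submodule.map_top]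
    exact ⟨m, by rw [hπ, DirectSum.decompose_of_mem_same ℳ hm]⟩
  rw [← Submodule.span_image, ← Set.range_comp] at hmπ
  refine Submodule.span_le.mpr ?_ hmπ
  rintro _ ⟨t, rfl⟩
  by_cases ht : deg t = d
  · rw [Function.comp_apply, hπ, ← ht, DirectSum.decompose_of_mem_same ℳ (hy t)]
    exact Submodule.subset_span ⟨t, rfl, rfl⟩
  · rw [Function.comp_apply, hπ, DirectSum.decompose_of_mem_ne ℳ (hy t) ht]
    exact Submodule.zero_mem _

theorem exists_finset_homogeneous_span_eq_top {K A ι M : Type*} [Semiring K] [Semiring A]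
    [DecidableEq ι] [AddCommMonoid M] [Module K M] [Module A M] [Module.Finite A M]
    {ℳ : ι → Submodule K M} [DirectSum.Decomposition ℳ] :
    ∃ G : Finset M, (∀ g ∈ G, ∃ a, g ∈ ℳ a) ∧ Submodule.span A (G : Set M) = ⊤ := by
  classical
  obtain ⟨T, hT⟩ := Module.Finite.fg_top (R := A) (M := M)
  refine ⟨T.biUnion fun t => (DirectSum.decompose ℳ t).support.image
    fun a => (DirectSum.decompose ℳ t a : M), ?_, ?_⟩
  · simp only [Finset.mem_biUnion, Finset.mem_image]
    rintro _ ⟨t, -, a, -, rfl⟩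
    exact ⟨a, (DirectSum.decompose ℳ t a).2⟩
  · rw [eq_top_iff, ← hT, Submodule.span_le]
    intro t ht
    rw [← DirectSum.sum_support_decompose ℳ t]
    refine Submodule.sum_mem _ fun a ha => Submodule.subset_span ?_
    exact Finset.mem_biUnion.mpr ⟨t, ht, Finset.mem_image_of_mem _ ha⟩

section MonomialBasis

variable {K A ι M : Type*} [Field K] [CommRing A] [Algebra K A] [AddCommMonoid ι] [DecidableEq ι]
  [AddCommGroup M] [Module A M] [Module K M]
  {B : Module.Basis ι K A} {ℳ : ι → Submodule K M} [DirectSum.Decomposition ℳ]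
  (hB : ∀ w v m, m ∈ ℳ v → B w • m ∈ ℳ (w + v))
include hB

theorem smul_mem_span_of_surjOn {d : ι}
    (hsurj : ∀ w, Set.SurjOn (B w • ·) (ℳ d : Set M) (ℳ (w + d))) (m : M) :
    B d • m ∈ Submodule.span A (ℳ d : Set M) := by
  classical
  rw [← DirectSum.sum_support_decompose ℳ m, Finset.smul_sum]
  refine Submodule.sum_mem _ fun w _ => ?_
  have hmem : B d • (DirectSum.decompose ℳ m w : M) ∈ ℳ (w + d) := by
    rw [add_comm]; exact hB d w _ (DirectSum.decompose ℳ m w).2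
  obtain ⟨n, hn, hn'⟩ := hsurj w hmem
  rw [← hn']
  exact Submodule.smul_mem _ _ (Submodule.subset_span hn)

variable [IsRightCancelAdd ι] [IsScalarTower K A M]

theorem coe_decompose_smul_of_mem {v : ι} {m : M} (hm : m ∈ ℳ v) (q : A) (w : ι) :
    (DirectSum.decompose ℳ (q • m) (w + v) : M) = B.repr q w • B w • m := by
  have hterm : ∀ w' c, c • B w' • m ∈ ℳ (w' + v) := fun w' c =>
    Submodule.smul_mem _ c (hB w' v m hm)
  conv_lhs => rw [← B.linearCombination_repr q, Finsupp.linearCombination_apply, Finsupp.sum,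
    Finset.sum_smul]
  simp_rw [smul_assoc]
  rw [DirectSum.decompose_sum, DFinsupp.finsetSum_apply, Submodule.coe_sum,
    Finset.sum_eq_single w]
  · exact DirectSum.decompose_of_mem_same ℳ (hterm w _)
  · intro w' _ hw'
    exact DirectSum.decompose_of_mem_ne ℳ (hterm w' _) (fun h => hw' (add_right_cancel h))
  · intro hw
    rw [Finsupp.notMem_support_iff.mp hw, zero_smul, DirectSum.decompose_zero]
    rfl

theorem linearIndependent_of_injOn {d : ι}
    (hinj : ∀ w, Set.InjOn (B w • ·) (ℳ d : Set M)) {κ : Type*} {v : κ → M}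
    (hv : ∀ i, v i ∈ ℳ d) (hli : LinearIndependent K v) : LinearIndependent A v := by
  rw [linearIndependent_iff']
  intro s p hsum i hi
  refine B.ext_elem fun w => ?_
  set z := ∑ j ∈ s, B.repr (p j) w • v j
  have hz : z ∈ ℳ d := Submodule.sum_mem _ fun j _ => Submodule.smul_mem _ _ (hv j)
  have hBz : B w • z = B w • 0 := by
    have := congrArg (fun x => (DirectSum.decompose ℳ x (w + d) : M)) hsum
    rw [DirectSum.decompose_sum, DFinsupp.finsetSum_apply, Submodule.coe_sum,
      DirectSum.decompose_zero, DirectSum.zero_apply, ZeroMemClass.coe_zero] at this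
    rw [smul_zero, Finset.smul_sum, ← this]
    refine Finset.sum_congr rfl fun j _ => ?_
    rw [coe_decompose_smul_of_mem hB (hv j), smul_comm (B w)]
  have hz0 : z = 0 := hinj w hz (Submodule.zero_mem _) hBz
  simpa using linearIndependent_iff'.mp hli s _ hz0 i hi

theorem exists_smul_eq_zero_of_mem_torsion [IsDomain A] [IsNoetherianRing A]
    [Module.Finite A M] :
    ∃ w₀, ∀ d, ∀ m ∈ ℳ d, m ∈ Submodule.torsion A M → B w₀ • m = 0 := by
  obtain ⟨c, hcann, hc⟩ := Submodule.annihilator_top_inter_nonZeroDivisors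
    (Submodule.torsion_isTorsion (R := A) (M := M))
  obtain ⟨w₀, hw₀⟩ : ∃ w₀, B.repr c w₀ ≠ 0 := by
    by_contra! h
    exact nonZeroDivisors.ne_zero hc (B.ext_elem fun w => by simp [h])
  refine ⟨w₀, fun d m hm hmt => ?_⟩
  have hcm : c • m = 0 :=
    congrArg Subtype.val (Submodule.mem_annihilator.mp hcann ⟨m, hmt⟩ Submodule.mem_top)
  have := coe_decompose_smul_of_mem hB hm c w₀
  rw [hcm, DirectSum.decompose_zero, DirectSum.zero_apply, ZeroMemClass.coe_zero, eq_comm,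
    smul_eq_zero] at this
  exact this.resolve_left hw₀

end MonomialBasis

theorem rk_eq_finrank_of_bijOn {K ι : Type*} [Field K] [AddCommMonoid ι] [IsRightCancelAdd ι]
    [DecidableEq ι] {A M : Type} [CommRing A] [IsDomain A] [Algebra K A]
    [AddCommGroup M] [Module A M] [Module K M] [IsScalarTower K A M]
    {B : Module.Basis ι K A} {ℳ : ι → Submodule K M} [DirectSum.Decomposition ℳ]
    (hB : ∀ w v m, m ∈ ℳ v → B w • m ∈ ℳ (w + v)) {d : ι} [FiniteDimensional K (ℳ d)]
    (hinj : ∀ w, Set.InjOn (B w • ·) (ℳ d : Set M))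
    (hsurj : ∀ w, Set.SurjOn (B w • ·) (ℳ d : Set M) (ℳ (w + d))) :
    rk A M = Module.finrank K (ℳ d) := by
  set b := Module.finBasis K (ℳ d)
  have hli : LinearIndependent K (fun i => (b i : M)) :=
    b.linearIndependent.map' _ (Submodule.ker_subtype _)
  have hspan : (ℳ d : Set M) ⊆ Submodule.span A (Set.range fun i => (b i : M)) := by
    intro m hm
    refine Submodule.span_le_restrictScalars K A _ ?_
    have := Submodule.mem_map_of_mem (f := (ℳ d).subtype) (b.mem_span ⟨m, hm⟩)
    rwa [← Submodule.span_image, ← Set.range_comp] at this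
  rw [rk_eq_card_of_linearIndependent (linearIndependent_of_injOn hB hinj (fun i => (b i).2) hli)
    (B.ne_zero d) (fun m => Submodule.span_le.mpr hspan (smul_mem_span_of_surjOn hB hsurj m)),
    Fintype.card_fin]

section MvPolynomialGraded

variable {K σ M : Type*} [Field K] [DecidableEq σ] [AddCommGroup M] [Module (MvPolynomial σ K) M]
  [Module K M] [IsScalarTower K (MvPolynomial σ K) M]
  {ℳ : (σ →₀ ℕ) → Submodule K M} [DirectSum.Decomposition ℳ]
  (hMgr : ∀ (u v : σ →₀ ℕ) (c : K) (m : M), m ∈ ℳ v →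
    MvPolynomial.monomial u c • m ∈ ℳ (u + v))
  {G : Finset M} {deg : M → σ →₀ ℕ} (hG : ∀ g ∈ G, g ∈ ℳ (deg g))
  (hspan : Submodule.span (MvPolynomial σ K) (G : Set M) = ⊤)
include hMgr hG hspan

theorem le_span_monomial_smul (d : σ →₀ ℕ) :
    ℳ d ≤ Submodule.span K
      ((fun t : (σ →₀ ℕ) × G => MvPolynomial.monomial t.1 (1 : K) • (t.2 : M))
        '' {t | t.1 + deg t.2 = d}) := by
  refine le_span_image_of_span_eq_top (deg := fun t : (σ →₀ ℕ) × G => t.1 + deg t.2)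
    (fun t => hMgr t.1 _ 1 _ (hG _ t.2.2)) ?_ d
  have hmon :
      Submodule.span K (Set.range fun w : σ →₀ ℕ => MvPolynomial.monomial w (1 : K)) = ⊤ := by
    rw [← MvPolynomial.coe_basisMonomials]; exact Module.Basis.span_eq _
  rw [← Set.range_smul_range (fun w => MvPolynomial.monomial w (1 : K)) (fun g : G => (g : M)),
    Submodule.span_smul_of_span_eq_top hmon, Subtype.range_coe_subtype, Finset.setOfPred_mem,
    hspan, Submodule.restrictScalars_top]

theorem finiteDimensional_of_span_eq_top (d : σ →₀ ℕ) : FiniteDimensional K (ℳ d) := by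
  have hfin : {t : (σ →₀ ℕ) × G | t.1 + deg t.2 = d}.Finite := by
    refine (Set.finite_range fun g : G => (d - deg g, g)).subset ?_
    rintro ⟨w, g⟩ (h : w + deg g = d)
    exact ⟨g, by simp [← h]⟩
  have := FiniteDimensional.span_of_finite K (hfin.image
    fun t : (σ →₀ ℕ) × G => MvPolynomial.monomial t.1 (1 : K) • (t.2 : M))
  exact Submodule.finiteDimensional_of_le (le_span_monomial_smul hMgr hG hspan d)

theorem surjOn_monomial_smul {d : σ →₀ ℕ} (hd : ∀ g ∈ G, deg g ≤ d) (w : σ →₀ ℕ) :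
    Set.SurjOn (MvPolynomial.monomial w (1 : K) • ·) (ℳ d : Set M) (ℳ (w + d)) := by
  intro m hm
  suffices ℳ (w + d) ≤ (ℳ d).map ((LinearMap.lsmul (MvPolynomial σ K) M
      (MvPolynomial.monomial w (1 : K))).restrictScalars K) from this hm
  refine (le_span_monomial_smul hMgr hG hspan _).trans (Submodule.span_le.mpr ?_)
  rintro _ ⟨⟨v, g, hg⟩, (h : v + deg g = w + d), rfl⟩
  have hwv : w ≤ v := le_of_add_le_add_right (a := deg g) (by rw [h]; gcongr; exact hd g hg)
  obtain ⟨v', rfl⟩ := exists_add_of_le hwv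
  refine ⟨MvPolynomial.monomial v' (1 : K) • g, ?_, ?_⟩
  · rw [add_assoc] at h
    exact add_left_cancel h ▸ hMgr v' _ 1 g (hG g hg)
  · simp [← mul_smul, MvPolynomial.monomial_mul, add_comm]

theorem eq_zero_of_mem_torsion {w₀ : σ →₀ ℕ}
    (hw₀ : ∀ d, ∀ m ∈ ℳ d, m ∈ Submodule.torsion (MvPolynomial σ K) M →
      MvPolynomial.monomial w₀ (1 : K) • m = 0)
    {d : σ →₀ ℕ} (hd : ∀ g ∈ G, deg g + w₀ ≤ d) (hw₀d : w₀ ≤ d) {m : M} (hm : m ∈ ℳ d)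
    (hmt : m ∈ Submodule.torsion (MvPolynomial σ K) M) : m = 0 := by
  obtain ⟨m', hm', rfl⟩ := surjOn_monomial_smul hMgr hG hspan
    (fun g hg => le_tsub_of_add_le_right (hd g hg)) w₀ (by rwa [add_tsub_cancel_of_le hw₀d])
  have hm't : m' ∈ Submodule.torsion (MvPolynomial σ K) M := by
    refine mem_torsion_of_smul_eq_zero (a := MvPolynomial.monomial (w₀ + w₀) (1 : K))
      (by simp [MvPolynomial.monomial_eq_zero]) ?_
    rw [← mul_one (1 : K), ← MvPolynomial.monomial_mul, mul_smul]
    exact hw₀ d _ hm hmt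
  exact hw₀ _ m' hm' hm't

end MvPolynomialGraded

section MvPolynomialFinite

variable {K σ M : Type*} [Field K] [DecidableEq σ] [AddCommGroup M]
  [Module (MvPolynomial σ K) M] [Module K M] [IsScalarTower K (MvPolynomial σ K) M]
  [Module.Finite (MvPolynomial σ K) M] {ℳ : (σ →₀ ℕ) → Submodule K M} [DirectSum.Decomposition ℳ]
  (hMgr : ∀ (u v : σ →₀ ℕ) (c : K) (m : M), m ∈ ℳ v →
    MvPolynomial.monomial u c • m ∈ ℳ (u + v))
include hMgr

theorem finiteDimensional_of_finite (d : σ →₀ ℕ) : FiniteDimensional K (ℳ d) := by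
  obtain ⟨G, hG, hspan⟩ := exists_finset_homogeneous_span_eq_top (A := MvPolynomial σ K) (ℳ := ℳ)
  choose! deg hdeg using hG
  exact finiteDimensional_of_span_eq_top hMgr hdeg hspan d

variable [Finite σ]

theorem exists_forall_le_bijOn_monomial_smul :
    ∃ D, ∀ d, D ≤ d → ∀ w,
      Set.BijOn (MvPolynomial.monomial w (1 : K) • ·) (ℳ d : Set M) (ℳ (w + d)) := by
  obtain ⟨G, hG, hspan⟩ := exists_finset_homogeneous_span_eq_top (A := MvPolynomial σ K) (ℳ := ℳ)
  choose! deg hdeg using hG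
  obtain ⟨w₀, hw₀⟩ := exists_smul_eq_zero_of_mem_torsion (B := MvPolynomial.basisMonomials σ K)
    (fun w v m hm => hMgr w v 1 m hm)
  refine ⟨(∑ g ∈ G, deg g) + w₀, fun d hD w => ⟨fun m hm => hMgr w d 1 m hm, ?_, ?_⟩⟩
  · have hd : ∀ g ∈ G, deg g + w₀ ≤ d := fun g hg =>
      (add_le_add_left (Finset.single_le_sum_of_canonicallyOrdered hg) w₀).trans hD
    intro m hm m' hm' h
    refine sub_eq_zero.mp (eq_zero_of_mem_torsion hMgr hdeg hspan hw₀ hd (le_add_self.trans hD)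
      (sub_mem hm hm') (mem_torsion_of_smul_eq_zero (a := MvPolynomial.monomial w (1 : K))
        (by simp [MvPolynomial.monomial_eq_zero]) ?_))
    rw [smul_sub]
    exact sub_eq_zero.mpr h
  · exact surjOn_monomial_smul hMgr hdeg hspan (fun g hg =>
      (Finset.single_le_sum_of_canonicallyOrdered hg).trans (le_self_add.trans hD)) w

end MvPolynomialFinite

section SetMaps

variable {α β : Type*}

theorem mapsTo_iterate_of_forall_succ {f : α → α} {s : ℕ → Set α}
    (h : ∀ j, Set.MapsTo f (s j) (s (j + 1))) (k j : ℕ) : Set.MapsTo f^[k] (s j) (s (k + j)) := by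
  induction k with
  | zero => simpa using Set.mapsTo_id (s j)
  | succ k ih => rw [Function.iterate_succ', Nat.succ_add]; exact (h _).comp ih

theorem bijOn_iterate_of_forall_succ {f : α → α} {s : ℕ → Set α} {N : ℕ}
    (h : ∀ j, N ≤ j → Set.BijOn f (s j) (s (j + 1))) (k : ℕ) {j : ℕ} (hj : N ≤ j) :
    Set.BijOn f^[k] (s j) (s (k + j)) := by
  induction k with
  | zero => simpa using Set.bijOn_id (s j)
  | succ k ih =>
    rw [Function.iterate_succ', Nat.succ_add]
    exact (h _ (hj.trans (Nat.le_add_left j k))).comp ih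

variable {f : α → α} {g : β → β} {s s' : Set α} {t t' : Set β} (e : s ≃ t) (e' : s' ≃ t')

theorem Set.MapsTo.of_equiv (hf : Set.MapsTo f s s')
    (hfg : ∀ (x : s) (hx : f x ∈ s'), g (e x) = e' ⟨f x, hx⟩) : Set.MapsTo g t t' := by
  intro y hy
  have := hfg (e.symm ⟨y, hy⟩) (hf (e.symm _).2)
  simp only [Equiv.apply_symm_apply] at this
  exact this ▸ (e' _).2

theorem Set.BijOn.of_equiv (hf : Set.BijOn f s s')
    (hfg : ∀ (x : s) (hx : f x ∈ s'), g (e x) = e' ⟨f x, hx⟩) : Set.BijOn g t t' := by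
  have hge : ∀ y (hy : y ∈ t), g y = e' ⟨f (e.symm ⟨y, hy⟩), hf.mapsTo (e.symm _).2⟩ :=
    fun y hy => by simpa using hfg (e.symm ⟨y, hy⟩) _
  refine ⟨hf.mapsTo.of_equiv e e' hfg, fun y hy y' hy' hyy' => ?_, fun z hz => ?_⟩
  · rw [hge y hy, hge y' hy', Subtype.coe_inj, e'.apply_eq_iff_eq, Subtype.mk.injEq] at hyy'
    have := e.symm.injective (Subtype.ext (hf.injOn (e.symm _).2 (e.symm _).2 hyy'))
    exact Subtype.ext_iff.mp this
  · obtain ⟨x, hx, hxz⟩ := hf.surjOn (e'.symm ⟨z, hz⟩).2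
    refine ⟨e ⟨x, hx⟩, (e _).2, ?_⟩
    rw [hge _ (e _).2]
    simp [hxz]

end SetMaps

theorem rk_eq_finrank_of_bijOn_X_smul {K M : Type} [Field K] [AddCommGroup M] [Module K[X] M]
    [Module K M] [IsScalarTower K K[X] M] {𝒩 : ℕ → Submodule K M} [DirectSum.Decomposition 𝒩]
    (hmaps : ∀ j, Set.MapsTo ((Polynomial.X : K[X]) • ·) (𝒩 j : Set M) (𝒩 (j + 1)))
    {N : ℕ} [FiniteDimensional K (𝒩 N)]
    (hbij : ∀ j, N ≤ j → Set.BijOn ((Polynomial.X : K[X]) • ·) (𝒩 j : Set M) (𝒩 (j + 1))) :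
    rk K[X] M = Module.finrank K (𝒩 N) := by
  have hB : ∀ k, (Polynomial.basisMonomials K k • · : M → M) = ((Polynomial.X : K[X]) • ·)^[k] :=
    fun k => by rw [smul_iterate, Polynomial.coe_basisMonomials, Polynomial.X_pow_eq_monomial]
  refine rk_eq_finrank_of_bijOn (B := Polynomial.basisMonomials K) (fun w v m hm => ?_)
    (fun w => ?_) (fun w => ?_)
  · exact congrFun (hB w) m ▸ mapsTo_iterate_of_forall_succ hmaps w v hm
  · exact hB w ▸ (bijOn_iterate_of_forall_succ hbij w le_rfl).injOn
  · exact hB w ▸ (bijOn_iterate_of_forall_succ hbij w le_rfl).surjOn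

theorem exists_le_nsmul_add {σ : Type*} {u : σ →₀ ℕ} (hu : ∀ i, 0 < u i) (D u₀ : σ →₀ ℕ) :
    ∃ N : ℕ, ∀ j, N ≤ j → D ≤ j • u + u₀ := by
  refine ⟨D.degree, fun j hj i => ?_⟩
  calc D i ≤ j := (D.le_degree i).trans hj
    _ ≤ j * u i := Nat.le_mul_of_pos_right j (hu i)
    _ ≤ (j • u + u₀) i := by simp

theorem statement17 (K : Type) [Field K] (r : ℕ)
    (M : Type) [AddCommGroup M] [Module (MvPolynomial (Fin r) K) M]
    [Module K M] [IsScalarTower K (MvPolynomial (Fin r) K) M]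
    [Module.Finite (MvPolynomial (Fin r) K) M]
    (ℳ : (Fin r →₀ ℕ) → Submodule K M)
    (hM : DirectSum.IsInternal ℳ)
    (hMgr : ∀ (u v : Fin r →₀ ℕ) (c : K) (m : M), m ∈ ℳ v →
      (MvPolynomial.monomial u c) • m ∈ ℳ (u + v))
    (u u₀ : Fin r →₀ ℕ) (hu : ∀ i : Fin r, 0 < u i) :
    (∃ N : ℕ, ∀ j : ℕ, N ≤ j →
        Module.finrank K ↥(ℳ (j • u + u₀)) = rk (MvPolynomial (Fin r) K) M) ∧
    (∀ (M' : Type) [AddCommGroup M'] [Module (Polynomial K) M']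
        [Module K M'] [IsScalarTower K (Polynomial K) M']
        (𝒩 : ℕ → Submodule K M'),
      DirectSum.IsInternal 𝒩 →
      ∀ e : ∀ j : ℕ, ↥(ℳ (j • u + u₀)) ≃ₗ[K] ↥(𝒩 j),
        (∀ (j : ℕ) (m : M) (hm1 : m ∈ ℳ (j • u + u₀))
            (hm2 : (MvPolynomial.monomial u (1 : K)) • m ∈ ℳ ((j + 1) • u + u₀)),
          (Polynomial.X : Polynomial K) • ((e j ⟨m, hm1⟩ : M')) =
            ((e (j + 1) ⟨(MvPolynomial.monomial u (1 : K)) • m, hm2⟩ : M'))) →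
        rk (Polynomial K) M' = rk (MvPolynomial (Fin r) K) M) := by
  let := hM.chooseDecomposition
  have := finiteDimensional_of_finite hMgr
  obtain ⟨D, hD⟩ := exists_forall_le_bijOn_monomial_smul hMgr
  obtain ⟨N, hN⟩ := exists_le_nsmul_add hu D u₀
  have hrk : ∀ j, N ≤ j → Module.finrank K (ℳ (j • u + u₀)) = rk (MvPolynomial (Fin r) K) M :=
    fun j hj => (rk_eq_finrank_of_bijOn (B := MvPolynomial.basisMonomials (Fin r) K)
      (fun w v m hm => hMgr w v 1 m hm) (fun w => (hD _ (hN j hj) w).injOn)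
      (fun w => (hD _ (hN j hj) w).surjOn)).symm
  refine ⟨⟨N, hrk⟩, fun M' _ _ _ _ 𝒩 h𝒩 e hcompat => ?_⟩
  let := h𝒩.chooseDecomposition
  have := (e N).finiteDimensional
  have hshift : ∀ j : ℕ, u + (j • u + u₀) = (j + 1) • u + u₀ := fun j => by
    rw [succ_nsmul, add_comm _ u, add_assoc]
  have hmaps : ∀ j, Set.MapsTo ((Polynomial.X : K[X]) • ·) (𝒩 j : Set M') (𝒩 (j + 1)) :=
    fun j => Set.MapsTo.of_equiv (e j).toEquiv (e (j + 1)).toEquiv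
      (hshift j ▸ fun m hm => hMgr u _ 1 m hm) (fun x hx => hcompat j x x.2 hx)
  have hbij : ∀ j, N ≤ j →
      Set.BijOn ((Polynomial.X : K[X]) • ·) (𝒩 j : Set M') (𝒩 (j + 1)) :=
    fun j hj => Set.BijOn.of_equiv (e j).toEquiv (e (j + 1)).toEquiv
      (hshift j ▸ hD _ (hN j hj) u) (fun x hx => hcompat j x x.2 hx)
  rw [rk_eq_finrank_of_bijOn_X_smul hmaps hbij, ← (e N).finrank_eq, hrk N le_rfl]
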